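/- arXiv:2003.03823 — 3 statements merged into one kernel-verified Lean document; each statement's English description precedes it below -/
import Mathlib

section
/- Let (ρ, P) be an admissible equilibrium. Then there exist constants C₁, C₂ > 0 such that for all z ∈ [0, z_+): |𝒜(z)|·√(γ·P(z)/ρ(z)) ≤ C₁ and |γ·𝒜(z)·P(z)·ρ'(z)/ρ(z)| ≤ C₂·ρ(z). -/
open MeasureTheory Set Filter Topology Asymptotics

noncomputable section

lemma aux_abs_le_of_tendsto {l : Filter ℝ} {F : ℝ → ℝ} {c : ℝ}
    (h : Tendsto F l (𝓝 c)) : ∀ᶠ z in l, |F z| ≤ |c| + 1 := by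
  have h1 := h (Metric.ball_mem_nhds c one_pos)
  filter_upwards [h1] with z hz
  simp only [mem_preimage, Metric.mem_ball, Real.dist_eq] at hz
  have h2 := abs_sub_abs_le_abs_sub (F z) c
  linarith

lemma aux_bound {zp : ℝ} (hzp : 0 < zp) {F : ℝ → ℝ} (hF : ContinuousOn F (Ico 0 zp))
    {M : ℝ} (hnear : ∀ᶠ z in 𝓝[<] zp, |F z| ≤ M) :
    ∃ C, 0 < C ∧ ∀ z ∈ Ico 0 zp, |F z| ≤ C := by
  obtain ⟨a, ha, hsub⟩ := mem_nhdsLT_iff_exists_Ioo_subset.1 hnear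
  have hbzp : max a 0 < zp := max_lt ha hzp
  have hIcc : Icc 0 (max a 0) ⊆ Ico 0 zp := fun x hx => ⟨hx.1, lt_of_le_of_lt hx.2 hbzp⟩
  obtain ⟨M', hM'⟩ := (isCompact_Icc).exists_bound_of_continuousOn (hF.mono hIcc)
  have h0 : 0 ≤ M' := le_trans (norm_nonneg _) (hM' 0 ⟨le_refl 0, le_max_right a 0⟩)
  refine ⟨max M M' + 1, by linarith [le_max_right M M'], fun z hz => ?_⟩
  by_cases h : z ≤ max a 0
  · have := hM' z ⟨hz.1, h⟩
    rw [Real.norm_eq_abs] at this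
    linarith [le_max_right M M']
  · push_neg at h
    have : z ∈ Ioo a zp := ⟨lt_of_le_of_lt (le_max_left a 0) h, hz.2⟩
    have := hsub this
    simp only [mem_setOf_eq] at this
    linarith [le_max_left M M']


structure AdmissibleEquilibrium (γ g zp : ℝ) where
  ρ : ℝ → ℝ
  P : ℝ → ℝ
  hγ1 : 1 < γ
  hγ2 : γ < 2
  hg : 0 < g
  hzp : 0 < zp
  ρ_smooth : ContDiffOn ℝ (⊤ : ℕ∞) ρ (Ico 0 zp)
  P_smooth : ContDiffOn ℝ (⊤ : ℕ∞) P (Ico 0 zp)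
  ρ_pos : ∀ z ∈ Ico 0 zp, 0 < ρ z
  dρ_neg : ∀ z ∈ Ico 0 zp, deriv ρ z < 0
  hydro : ∀ z ∈ Ico 0 zp, deriv P z = -g * ρ z
  Cρ : ℝ
  hCρ : 0 < Cρ
  Λ₁ : ℝ → ℝ
  Λ₂ : ℝ → ℝ
  hΛ₁ : AnalyticAt ℝ Λ₁ 0
  hΛ₂ : AnalyticAt ℝ Λ₂ 0
  hΛ₁0 : Λ₁ 0 = 0
  hΛ₂0 : Λ₂ 0 = 0
  ρ_asymp : ∀ᶠ z in 𝓝[<] zp,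
    ρ z = Cρ * (zp - z) ^ (1 / (γ - 1) : ℝ) * (1 + Λ₁ (zp - z))
  P_asymp : ∀ᶠ z in 𝓝[<] zp,
    P z = g * Cρ / (1 / (γ - 1) + 1) * (zp - z) ^ ((1 / (γ - 1) : ℝ) + 1) * (1 + Λ₂ (zp - z))

/-- With `𝒜 = ρ'/ρ − P'/(γP)` and `c² = γP/ρ`, the bounds
`|𝒜|·√(γP/ρ) ≤ C₁` and `|γ𝒜P·ρ'/ρ| ≤ C₂·ρ` hold on `[0, z_+)`. -/
theorem A_bounds {γ g zp : ℝ} (e : AdmissibleEquilibrium γ g zp) :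
    ∃ C₁ : ℝ, 0 < C₁ ∧ ∃ C₂ : ℝ, 0 < C₂ ∧ ∀ z ∈ Ico 0 zp,
      |deriv e.ρ z / e.ρ z - deriv e.P z / (γ * e.P z)| *
        Real.sqrt (γ * e.P z / e.ρ z) ≤ C₁ ∧
      |γ * (deriv e.ρ z / e.ρ z - deriv e.P z / (γ * e.P z)) * e.P z *
        deriv e.ρ z / e.ρ z| ≤ C₂ * e.ρ z := by
  obtain ⟨ρ, P, hγ1, hγ2, hg, hzp, ρ_smooth, P_smooth, ρ_pos, dρ_neg, hydro, Cρ, hCρ,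
    Λ₁, Λ₂, hΛ₁, hΛ₂, hΛ₁0, hΛ₂0, hρa, hPa⟩ := e
  have hγ0 : (0:ℝ) < γ := lt_trans one_pos hγ1
  have hγ1' : (0:ℝ) < γ - 1 := by linarith [hγ1]
  obtain ⟨ν, hν_def⟩ : ∃ ν : ℝ, ν = 1 / (γ - 1) := ⟨_, rfl⟩
  rw [← hν_def] at hρa hPa
  have hν : 0 < ν := by rw [hν_def]; positivity
  have hν1 : ν + 1 ≠ 0 := by positivity
  have hγe : γ = (ν + 1) / ν := by rw [hν_def]; field_simp; ring
  -- map to s = zp - z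
  have hmap : Tendsto (fun z => zp - z) (𝓝[<] zp) (𝓝[>] (0:ℝ)) := by
    apply tendsto_nhdsWithin_of_tendsto_nhds_of_eventually_within
    · have : Tendsto (fun z => zp - z) (𝓝 zp) (𝓝 (zp - zp)) :=
        (continuous_const.sub continuous_id).tendsto zp
      rw [sub_self] at this
      exact this.mono_left nhdsWithin_le_nhds
    · exact eventually_of_mem self_mem_nhdsWithin fun z hz => by
        simp only [mem_Ioi, sub_pos]; exact hz
  -- analytic facts near 0
  have hd1 : ∀ᶠ s in 𝓝 (0:ℝ), HasDerivAt Λ₁ (deriv Λ₁ s) s :=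
    hΛ₁.eventually_analyticAt.mono fun s hs => hs.differentiableAt.hasDerivAt
  have hcΛ₁ : Tendsto Λ₁ (𝓝 0) (𝓝 0) := by
    have h := hΛ₁.continuousAt.tendsto; rwa [hΛ₁0] at h
  have hcΛ₂ : Tendsto Λ₂ (𝓝 0) (𝓝 0) := by
    have h := hΛ₂.continuousAt.tendsto; rwa [hΛ₂0] at h
  have hp1 : ∀ᶠ s in 𝓝 (0:ℝ), 0 < 1 + Λ₁ s := by
    filter_upwards [hcΛ₁.eventually (eventually_gt_nhds (show (-1:ℝ) < 0 by norm_num))] with s hs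
    linarith
  have hp2 : ∀ᶠ s in 𝓝 (0:ℝ), 0 < 1 + Λ₂ s := by
    filter_upwards [hcΛ₂.eventually (eventually_gt_nhds (show (-1:ℝ) < 0 by norm_num))] with s hs
    linarith
  -- pack eventual facts near zp
  have ht := hmap.mono_right nhdsWithin_le_nhds
  have hz0 : ∀ᶠ z in 𝓝[<] zp, (0:ℝ) ≤ z :=
    eventually_of_mem (Ioo_mem_nhdsLT_of_mem ⟨hzp, le_refl zp⟩) (fun z hz => hz.1.le)
  have hev := hz0.and (hρa.and (hPa.and ((ht.eventually hd1).and
      ((ht.eventually hp1).and (ht.eventually hp2)))))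
  obtain ⟨a, ha, hS⟩ := mem_nhdsLT_iff_exists_Ioo_subset.1 hev
  have hSmem : Ioo a zp ∈ 𝓝[<] zp := Ioo_mem_nhdsLT_of_mem ⟨ha, le_refl zp⟩

  obtain ⟨Af, hAf⟩ : ∃ f : ℝ → ℝ, f = fun s =>
    ν * ((Λ₁ s - Λ₂ s) / s) / (1 + Λ₂ s) - deriv Λ₁ s / (1 + Λ₁ s) := ⟨_, rfl⟩
  obtain ⟨cf, hcf⟩ : ∃ f : ℝ → ℝ, f = fun s =>
    γ * (g * Cρ / (ν + 1)) * s * (1 + Λ₂ s) / (Cρ * (1 + Λ₁ s)) := ⟨_, rfl⟩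
  obtain ⟨Bf, hBf⟩ : ∃ f : ℝ → ℝ, f = fun s =>
    γ * Af s * (g * Cρ / (ν + 1) * (1 + Λ₂ s) / (Cρ * (1 + Λ₁ s))) *
      (-ν - s * deriv Λ₁ s / (1 + Λ₁ s)) := ⟨_, rfl⟩
  have keys : ∀ z ∈ Ioo a zp,
      (deriv ρ z / ρ z - deriv P z / (γ * P z) = Af (zp - z)) ∧
      (γ * P z / ρ z = cf (zp - z)) ∧
      (γ * (deriv ρ z / ρ z - deriv P z / (γ * P z)) * P z *
        deriv ρ z / ρ z / ρ z = Bf (zp - z)) := by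
    intro z hzS
    obtain ⟨hz0, hρz, hPz, hder, hpos1, hpos2⟩ := hS hzS
    have hzIco : z ∈ Ico 0 zp := ⟨hz0, hzS.2⟩
    have hs : 0 < zp - z := sub_pos.2 hzS.2
    have hXpos : 0 < (zp - z) ^ ν := Real.rpow_pos_of_pos hs ν
    have hX1 : (zp - z) ^ (ν - 1) = (zp - z) ^ ν / (zp - z) := by
      rw [Real.rpow_sub hs, Real.rpow_one]
    have hX2 : (zp - z) ^ (ν + 1) = (zp - z) ^ ν * (zp - z) := by
      rw [Real.rpow_add hs, Real.rpow_one]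
    -- derivative of ρ near z
    have h1 : HasDerivAt (fun w => zp - w) (-1 : ℝ) z := by
      simpa using (hasDerivAt_id z).const_sub zp
    have h2 : HasDerivAt (fun w => (zp - w) ^ ν) (ν * (zp - z) ^ (ν - 1) * (-1)) z := by
      have := (Real.hasDerivAt_rpow_const (x := zp - z) (p := ν) (Or.inl hs.ne')).comp z h1
      simpa [Function.comp_def] using this
    have h3 : HasDerivAt (fun w => 1 + Λ₁ (zp - w)) (deriv Λ₁ (zp - z) * (-1)) z := by
      have := (hder.comp z h1).const_add 1
      simpa [Function.comp] using this
    have h4 := (h2.const_mul Cρ).mul h3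
    have hFeq : ρ =ᶠ[𝓝 z] fun w => Cρ * (zp - w) ^ ν * (1 + Λ₁ (zp - w)) := by
      refine eventuallyEq_of_mem (isOpen_Ioo.mem_nhds hzS) fun w hw => ?_
      exact (hS hw).2.1
    have hdρz : deriv ρ z =
        Cρ * (ν * (zp - z) ^ (ν - 1) * (-1)) * (1 + Λ₁ (zp - z)) +
          Cρ * (zp - z) ^ ν * (deriv Λ₁ (zp - z) * (-1)) := by
      rw [hFeq.deriv_eq]
      exact h4.deriv
    have hdPz : deriv P z = -g * ρ z := hydro z hzIco
    have hne1 : (1 : ℝ) + Λ₁ (zp - z) ≠ 0 := hpos1.ne'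
    have hne2 : (1 : ℝ) + Λ₂ (zp - z) ≠ 0 := hpos2.ne'
    have heA : deriv ρ z / ρ z - deriv P z / (γ * P z) = Af (zp - z) := by
      rw [hdρz, hdPz, hρz, hPz, hX1, hX2]
      simp only [hAf]
      rw [hγe]
      field_simp
      ring
    refine ⟨heA, ?_, ?_⟩
    · rw [hρz, hPz, hX2]
      simp only [hcf]
      field_simp
    · rw [heA, hdρz, hρz, hPz, hX1, hX2]
      simp only [hBf]
      field_simp
      ring
  -- limits as s → 0⁺
  have tid : Tendsto (fun s : ℝ => s) (𝓝[>] (0:ℝ)) (𝓝 0) :=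
    tendsto_id.mono_right nhdsWithin_le_nhds
  have tΛ₁ : Tendsto Λ₁ (𝓝[>] (0:ℝ)) (𝓝 0) := hcΛ₁.mono_left nhdsWithin_le_nhds
  have tΛ₂ : Tendsto Λ₂ (𝓝[>] (0:ℝ)) (𝓝 0) := hcΛ₂.mono_left nhdsWithin_le_nhds
  have td : Tendsto (deriv Λ₁) (𝓝[>] (0:ℝ)) (𝓝 (deriv Λ₁ 0)) := by
    have h1 : ContinuousAt (fderiv ℝ Λ₁) 0 := hΛ₁.fderiv.continuousAt
    have h3 : deriv Λ₁ = fun x => (fderiv ℝ Λ₁ x) 1 := by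
      funext x; rw [← fderiv_apply_one_eq_deriv]
    have h2 : ContinuousAt (deriv Λ₁) 0 := by
      rw [h3]
      exact ((ContinuousLinearMap.apply ℝ ℝ (1:ℝ)).continuous.continuousAt).comp h1
    exact h2.tendsto.mono_left nhdsWithin_le_nhds
  have tslope : Tendsto (fun s => (Λ₁ s - Λ₂ s) / s) (𝓝[>] (0:ℝ))
      (𝓝 (deriv Λ₁ 0 - deriv Λ₂ 0)) := by
    have hd : HasDerivAt (fun s => Λ₁ s - Λ₂ s) (deriv Λ₁ 0 - deriv Λ₂ 0) 0 :=
      hΛ₁.differentiableAt.hasDerivAt.sub hΛ₂.differentiableAt.hasDerivAt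
    have hsl := hasDerivAt_iff_tendsto_slope.1 hd
    have hmono : 𝓝[>] (0:ℝ) ≤ 𝓝[≠] (0:ℝ) :=
      nhdsWithin_mono 0 (fun s hs => ne_of_gt hs)
    refine Tendsto.congr' ?_ (hsl.mono_left hmono)
    refine eventually_of_mem self_mem_nhdsWithin fun s hs => ?_
    simp [slope_def_field, hΛ₁0, hΛ₂0]
  have hc1 : Tendsto (fun s => 1 + Λ₁ s) (𝓝[>] (0:ℝ)) (𝓝 (1 + 0)) :=
    tendsto_const_nhds.add tΛ₁
  have hc2 : Tendsto (fun s => 1 + Λ₂ s) (𝓝[>] (0:ℝ)) (𝓝 (1 + 0)) :=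
    tendsto_const_nhds.add tΛ₂
  have hne1' : (1:ℝ) + 0 ≠ 0 := by norm_num
  have tA : Tendsto Af (𝓝[>] (0:ℝ))
      (𝓝 (ν * (deriv Λ₁ 0 - deriv Λ₂ 0) / (1 + 0) - deriv Λ₁ 0 / (1 + 0))) := by
    rw [hAf]
    exact ((tendsto_const_nhds.mul tslope).div hc2 hne1').sub (td.div hc1 hne1')
  have tc : Tendsto cf (𝓝[>] (0:ℝ))
      (𝓝 (γ * (g * Cρ / (ν + 1)) * 0 * (1 + 0) / (Cρ * (1 + 0)))) := by
    rw [hcf]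
    exact ((tendsto_const_nhds.mul tid).mul hc2).div
      (tendsto_const_nhds.mul hc1) (mul_pos hCρ (by norm_num)).ne'
  have tB : Tendsto Bf (𝓝[>] (0:ℝ))
      (𝓝 (γ * (ν * (deriv Λ₁ 0 - deriv Λ₂ 0) / (1 + 0) - deriv Λ₁ 0 / (1 + 0)) *
        (g * Cρ / (ν + 1) * (1 + 0) / (Cρ * (1 + 0))) *
        (-ν - 0 * deriv Λ₁ 0 / (1 + 0)))) := by
    rw [hBf]
    exact ((tendsto_const_nhds.mul tA).mul
      ((tendsto_const_nhds.mul hc2).div (tendsto_const_nhds.mul hc1)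
        (mul_pos hCρ (by norm_num)).ne')).mul
      (tendsto_const_nhds.sub ((tid.mul td).div hc1 hne1'))
  obtain ⟨LA, tA⟩ : ∃ L, Tendsto Af (𝓝[>] (0:ℝ)) (𝓝 L) := ⟨_, tA⟩
  obtain ⟨Lc, tc⟩ : ∃ L, Tendsto cf (𝓝[>] (0:ℝ)) (𝓝 L) := ⟨_, tc⟩
  obtain ⟨LB, tB⟩ : ∃ L, Tendsto Bf (𝓝[>] (0:ℝ)) (𝓝 L) := ⟨_, tB⟩
  have hSev : ∀ᶠ z in 𝓝[<] zp, z ∈ Ioo a zp := eventually_of_mem hSmem fun _ h => h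
  -- transfer to 𝓝[<] zp
  have heqF₁ : (fun z => |Af (zp - z)| * Real.sqrt (cf (zp - z))) =ᶠ[𝓝[<] zp]
      (fun z => |deriv ρ z / ρ z - deriv P z / (γ * P z)| * Real.sqrt (γ * P z / ρ z)) := by
    filter_upwards [hSev] with z hz
    rw [(keys z hz).1, (keys z hz).2.1]
  have tF₁ : Tendsto
      (fun z => |deriv ρ z / ρ z - deriv P z / (γ * P z)| * Real.sqrt (γ * P z / ρ z))
      (𝓝[<] zp) (𝓝 (|LA| * Real.sqrt Lc)) :=
    Tendsto.congr' heqF₁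
      ((tA.abs.mul ((Real.continuous_sqrt.tendsto Lc).comp tc)).comp hmap)
  have heqF₂ : (fun z => |Bf (zp - z)|) =ᶠ[𝓝[<] zp]
      (fun z => |γ * (deriv ρ z / ρ z - deriv P z / (γ * P z)) * P z *
        deriv ρ z / ρ z / ρ z|) := by
    filter_upwards [hSev] with z hz
    rw [(keys z hz).2.2]
  have tF₂ : Tendsto
      (fun z => |γ * (deriv ρ z / ρ z - deriv P z / (γ * P z)) * P z *
        deriv ρ z / ρ z / ρ z|) (𝓝[<] zp) (𝓝 |LB|) :=
    Tendsto.congr' heqF₂ (tB.abs.comp hmap)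
  have evF₁ := aux_abs_le_of_tendsto tF₁
  have evF₂ := aux_abs_le_of_tendsto tF₂
  -- continuity on Ico
  have hρcont := ρ_smooth.continuousOn
  have hPcont := P_smooth.continuousOn
  have hρne : ∀ x ∈ Ico 0 zp, ρ x ≠ 0 := fun x hx => (ρ_pos x hx).ne'
  have hdiff0 : DifferentiableAt ℝ ρ 0 := by
    by_contra h
    have h0 := deriv_zero_of_not_differentiableAt h
    have h1 := dρ_neg 0 ⟨le_refl 0, hzp⟩
    rw [h0] at h1; exact lt_irrefl 0 h1
  have hUD : UniqueDiffOn ℝ (Ico (0:ℝ) zp) := uniqueDiffOn_Ico 0 zp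
  have hEqd : EqOn (derivWithin ρ (Ico 0 zp)) (deriv ρ) (Ico 0 zp) := by
    intro x hx
    rcases eq_or_lt_of_le hx.1 with h0 | h0
    · rw [← h0] at hx ⊢
      exact hdiff0.derivWithin (hUD 0 hx)
    · exact derivWithin_of_mem_nhds
        (mem_of_superset (isOpen_Ioo.mem_nhds ⟨h0, hx.2⟩) Ioo_subset_Ico_self)
  have hdρcont : ContinuousOn (deriv ρ) (Ico 0 zp) :=
    (ρ_smooth.continuousOn_derivWithin hUD (by simp)).congr fun x hx => (hEqd hx).symm
  have hdPcont : ContinuousOn (deriv P) (Ico 0 zp) :=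
    (continuousOn_const.mul hρcont).congr fun x hx => hydro x hx
  -- positivity of P
  have hPposNear : ∀ᶠ z in 𝓝[<] zp, 0 < P z := by
    filter_upwards [hPa, ht.eventually hp2, self_mem_nhdsWithin] with z h1 h2 h3
    rw [h1]
    have hs : 0 < zp - z := sub_pos.2 h3
    have hr := Real.rpow_pos_of_pos hs (ν + 1)
    exact mul_pos (mul_pos (div_pos (mul_pos hg hCρ) (by linarith)) hr) h2
  have hPpos : ∀ x ∈ Ico 0 zp, 0 < P x := by
    intro x hx
    obtain ⟨z', hz'pos, hz'mem⟩ := (hPposNear.and (eventually_of_mem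
      (Ioo_mem_nhdsLT_of_mem ⟨hx.2, le_refl zp⟩) fun w hw => hw)).exists
    have hsub2 : Icc x z' ⊆ Ico 0 zp := fun w hw =>
      ⟨hx.1.trans hw.1, lt_of_le_of_lt hw.2 hz'mem.2⟩
    have hanti : StrictAntiOn P (Icc x z') := strictAntiOn_of_deriv_neg (convex_Icc x z')
      (hPcont.mono hsub2) (fun w hw => by
        rw [interior_Icc] at hw
        rw [hydro w (hsub2 (Ioo_subset_Icc_self hw))]
        have := ρ_pos w (hsub2 (Ioo_subset_Icc_self hw))
        nlinarith)
    have hlt := hanti ⟨le_refl x, hz'mem.1.le⟩ ⟨hz'mem.1.le, le_refl z'⟩ hz'mem.1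
    linarith
  have hγPne : ∀ x ∈ Ico 0 zp, γ * P x ≠ 0 := fun x hx => (mul_pos hγ0 (hPpos x hx)).ne'
  have hAcont : ContinuousOn (fun z => deriv ρ z / ρ z - deriv P z / (γ * P z)) (Ico 0 zp) :=
    (hdρcont.div hρcont hρne).sub (hdPcont.div (continuousOn_const.mul hPcont) hγPne)
  have hF₁cont : ContinuousOn
      (fun z => |deriv ρ z / ρ z - deriv P z / (γ * P z)| * Real.sqrt (γ * P z / ρ z))
      (Ico 0 zp) :=
    hAcont.abs.mul (((continuousOn_const.mul hPcont).div hρcont hρne).sqrt)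
  have hF₂cont : ContinuousOn
      (fun z => |γ * (deriv ρ z / ρ z - deriv P z / (γ * P z)) * P z *
        deriv ρ z / ρ z / ρ z|) (Ico 0 zp) :=
    (((((continuousOn_const.mul hAcont).mul hPcont).mul hdρcont).div hρcont hρne).div
      hρcont hρne).abs
  obtain ⟨C₁, hC₁0, hC₁⟩ := aux_bound hzp hF₁cont evF₁
  obtain ⟨C₂, hC₂0, hC₂⟩ := aux_bound hzp hF₂cont evF₂
  refine ⟨C₁, hC₁0, C₂, hC₂0, fun z hz => ⟨?_, ?_⟩⟩
  · have h := hC₁ z hz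
    rwa [abs_of_nonneg (mul_nonneg (abs_nonneg _) (Real.sqrt_nonneg _))] at h
  · have h := hC₂ z hz
    rw [abs_abs] at h
    have hρz := ρ_pos z hz
    have hkey : |γ * (deriv ρ z / ρ z - deriv P z / (γ * P z)) * P z *
        deriv ρ z / ρ z / ρ z| * ρ z =
        |γ * (deriv ρ z / ρ z - deriv P z / (γ * P z)) * P z * deriv ρ z / ρ z| := by
      rw [abs_div (γ * (deriv ρ z / ρ z - deriv P z / (γ * P z)) * P z * deriv ρ z / ρ z)
        (ρ z), abs_of_pos hρz, div_mul_cancel₀ _ hρz.ne']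
    rw [← hkey]
    exact mul_le_mul_of_nonneg_right h hρz.le
end
end

section
/- Let (ρ, P) be an admissible equilibrium with 𝒜(z) ≠ 0 for almost every z ∈ (0, z_+), and let l > 0. Suppose u, w : (0, z_+) → ℂ are continuous, ρw and (δP̌)_l are locally absolutely continuous, and L_l(u,w) = (0,0) on (0, z_+), i.e. (δP̌)_l = 0 and (δP̌)_l' + g·(δρ̌)_l = 0, where (δρ̌)_l = −lρu − (ρw)' and (δP̌)_l = c²(δρ̌)_l + γ𝒜Pw. Then u ≡ 0 and w ≡ 0 on (0, z_+). (The kernel of L_l is trivial.) -/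
open MeasureTheory Set Filter Topology Asymptotics

noncomputable section

/-- `𝒜 = ρ'/ρ − P'/(γP)`. -/
def Aeq {γ g zp : ℝ} (e : AdmissibleEquilibrium γ g zp) (z : ℝ) : ℝ :=
  deriv e.ρ z / e.ρ z - deriv e.P z / (γ * e.P z)

/-- `(δρ̌)_l = −lρu − (ρw)'`. -/
def deltaRho {γ g zp : ℝ} (e : AdmissibleEquilibrium γ g zp)
    (l : ℝ) (u w : ℝ → ℂ) (z : ℝ) : ℂ :=
  -(l : ℂ) * (e.ρ z : ℝ) * u z - deriv (fun s => ((e.ρ s : ℝ) : ℂ) * w s) z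

/-- `(δP̌)_l = c²(δρ̌)_l + γ𝒜Pw`, with `c² = γP/ρ`. -/
def deltaP {γ g zp : ℝ} (e : AdmissibleEquilibrium γ g zp)
    (l : ℝ) (u w : ℝ → ℂ) (z : ℝ) : ℂ :=
  ((γ * e.P z / e.ρ z : ℝ) : ℂ) * deltaRho e l u w z
    + ((γ * Aeq e z * e.P z : ℝ) : ℂ) * w z

/-- `L_l^u(u,w) = −(l/ρ)(δP̌)_l`. -/
def Lu {γ g zp : ℝ} (e : AdmissibleEquilibrium γ g zp)
    (l : ℝ) (u w : ℝ → ℂ) (z : ℝ) : ℂ :=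
  -((l : ℂ) / ((e.ρ z : ℝ) : ℂ)) * deltaP e l u w z

/-- `L_l^w(u,w) = (1/ρ)(δP̌)_l' + (g/ρ)(δρ̌)_l`. -/
def Lw {γ g zp : ℝ} (e : AdmissibleEquilibrium γ g zp)
    (l : ℝ) (u w : ℝ → ℂ) (z : ℝ) : ℂ :=
  (1 / ((e.ρ z : ℝ) : ℂ)) * deriv (deltaP e l u w) z
    + ((g / e.ρ z : ℝ) : ℂ) * deltaRho e l u w z


/-- If `𝒜 ≠ 0` a.e. on `(0, z_+)`, the kernel of `L_l` is trivial: any continuous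
pair `(u,w)` (with `ρw` and `(δP̌)_l` differentiable) satisfying `(δP̌)_l = 0`
and `(δP̌)_l' + g(δρ̌)_l = 0` on `(0, z_+)` vanishes identically. -/
theorem kernel_trivial_of_A_ne_zero {γ g zp : ℝ}
    (e : AdmissibleEquilibrium γ g zp) (l : ℝ) (hl : 0 < l)
    (hA : ∀ᵐ z ∂(volume.restrict (Ioo 0 zp)), Aeq e z ≠ 0)
    (u w : ℝ → ℂ)
    (hu : ContinuousOn u (Ioo 0 zp)) (hw : ContinuousOn w (Ioo 0 zp))
    (hρw : ∀ z ∈ Ioo 0 zp, DifferentiableAt ℝ (fun t => ((e.ρ t : ℝ) : ℂ) * w t) z)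
    (hδP : ∀ z ∈ Ioo 0 zp, DifferentiableAt ℝ (deltaP e l u w) z)
    (hker₁ : ∀ z ∈ Ioo 0 zp, deltaP e l u w z = 0)
    (hker₂ : ∀ z ∈ Ioo 0 zp,
      deriv (deltaP e l u w) z + (g : ℂ) * deltaRho e l u w z = 0) :
    ∀ z ∈ Ioo 0 zp, u z = 0 ∧ w z = 0 := by
  have hopen : IsOpen (Ioo (0:ℝ) zp) := isOpen_Ioo
  -- Step 1: deriv (deltaP) = 0 on Ioo
  have hderiv0 : ∀ z ∈ Ioo (0:ℝ) zp, deriv (deltaP e l u w) z = 0 := by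
    intro z hz
    have h1 : deltaP e l u w =ᶠ[𝓝 z] fun _ => (0:ℂ) :=
      Filter.eventually_of_mem (hopen.mem_nhds hz) hker₁
    rw [h1.deriv_eq, deriv_const]
  -- Step 2: deltaRho = 0 on Ioo
  have hρ0 : ∀ z ∈ Ioo (0:ℝ) zp, deltaRho e l u w z = 0 := by
    intro z hz
    have h2 := hker₂ z hz
    rw [hderiv0 z hz, zero_add] at h2
    have hgne : (g:ℂ) ≠ 0 := by exact_mod_cast e.hg.ne'
    exact (mul_eq_zero.mp h2).resolve_left hgne
  have hρpos : ∀ z ∈ Ioo (0:ℝ) zp, 0 < e.ρ z := fun z hz => e.ρ_pos z ⟨hz.1.le, hz.2⟩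
  -- Step 3: P > 0 on Ioo
  have hPpos : ∀ z ∈ Ioo (0:ℝ) zp, 0 < e.P z := by
    intro z hz
    have htend : Tendsto (fun s : ℝ => zp - s) (𝓝[<] zp) (𝓝 0) := by
      have h : Tendsto (fun s : ℝ => zp - s) (𝓝 zp) (𝓝 (zp - zp)) :=
        (continuous_const.sub continuous_id).tendsto zp
      rw [sub_self] at h
      exact h.mono_left nhdsWithin_le_nhds
    have hΛc : Tendsto (fun s => e.Λ₂ (zp - s)) (𝓝[<] zp) (𝓝 0) := by
      have h := e.hΛ₂.continuousAt.tendsto.comp htend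
      rwa [e.hΛ₂0] at h
    have h1 : ∀ᶠ s in 𝓝[<] zp, 0 < 1 + e.Λ₂ (zp - s) := by
      filter_upwards [hΛc.eventually (eventually_gt_nhds (by norm_num : (-1:ℝ) < 0))] with s hs
      linarith
    have hν : (0:ℝ) < 1/(γ-1) + 1 := by
      have : (0:ℝ) < γ - 1 := by linarith [e.hγ1]
      positivity
    have h2 : ∀ᶠ s in 𝓝[<] zp, 0 < e.P s := by
      filter_upwards [e.P_asymp, h1, self_mem_nhdsWithin] with s hPs h1s hs
      have hsz : s < zp := hs
      have hpow : 0 < (zp - s) ^ ((1/(γ-1):ℝ) + 1) :=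
        Real.rpow_pos_of_pos (by linarith) _
      rw [hPs]
      have := e.hg
      have := e.hCρ
      positivity
    have h3 : Ioo z zp ∈ 𝓝[<] zp := Ioo_mem_nhdsLT hz.2
    obtain ⟨s, hPs, hsmem⟩ := (h2.and h3).exists
    have hsub : Icc z s ⊆ Ico 0 zp := fun t ht =>
      ⟨le_trans hz.1.le ht.1, lt_of_le_of_lt ht.2 hsmem.2⟩
    have hanti : StrictAntiOn e.P (Icc z s) := by
      apply strictAntiOn_of_deriv_neg (convex_Icc z s)
      · exact (e.P_smooth.continuousOn).mono hsub
      · intro t ht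
        rw [interior_Icc] at ht
        have htm : t ∈ Ico 0 zp := hsub ⟨ht.1.le, ht.2.le⟩
        rw [e.hydro t htm]
        have := e.ρ_pos t htm
        have := e.hg
        nlinarith
    have hlt : e.P s < e.P z :=
      hanti (left_mem_Icc.mpr hsmem.1.le) (right_mem_Icc.mpr hsmem.1.le) hsmem.1
    linarith
  -- Step 4: w = 0 a.e.
  have hγne : γ ≠ 0 := by linarith [e.hγ1]
  have hw0ae : ∀ᵐ z ∂(volume.restrict (Ioo 0 zp)), w z = 0 := by
    filter_upwards [hA, ae_restrict_mem measurableSet_Ioo] with z hAz hz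
    have h1 := hker₁ z hz
    rw [deltaP, hρ0 z hz, mul_zero, zero_add] at h1
    have h2 : ((γ * Aeq e z * e.P z : ℝ) : ℂ) ≠ 0 := by
      simp only [ne_eq, Complex.ofReal_eq_zero]
      exact mul_ne_zero (mul_ne_zero hγne hAz) (hPpos z hz).ne'
    exact (mul_eq_zero.mp h1).resolve_left h2
  -- Step 5: w = 0 everywhere on Ioo by continuity
  have hw0 : ∀ z ∈ Ioo (0:ℝ) zp, w z = 0 := by
    intro z hz
    by_contra hne
    have hc : ContinuousAt w z := (hw z hz).continuousAt (hopen.mem_nhds hz)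
    have hev : ∀ᶠ s in 𝓝 z, w s ≠ 0 ∧ s ∈ Ioo (0:ℝ) zp :=
      (hc.eventually_ne hne).and
        (Filter.eventually_of_mem (hopen.mem_nhds hz) fun s hs => hs)
    obtain ⟨U, hUsub, hUopen, hzU⟩ := mem_nhds_iff.mp hev
    have hpos : 0 < volume.restrict (Ioo (0:ℝ) zp) U := by
      rw [Measure.restrict_apply hUopen.measurableSet]
      have : U ∩ Ioo (0:ℝ) zp = U := inter_eq_left.mpr fun t ht => (hUsub ht).2
      rw [this]
      exact hUopen.measure_pos volume ⟨z, hzU⟩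
    have hnull : volume.restrict (Ioo (0:ℝ) zp) {s | w s ≠ 0} = 0 := hw0ae
    have : volume.restrict (Ioo (0:ℝ) zp) U = 0 :=
      le_antisymm (hnull ▸ measure_mono fun t ht => (hUsub ht).1) bot_le
    exact absurd this hpos.ne'
  -- Step 6: u = 0
  intro z hz
  refine ⟨?_, hw0 z hz⟩
  have hd : deriv (fun s => ((e.ρ s : ℝ) : ℂ) * w s) z = 0 := by
    have h1 : (fun s => ((e.ρ s : ℝ) : ℂ) * w s) =ᶠ[𝓝 z] fun _ => (0:ℂ) := by
      filter_upwards [hopen.mem_nhds hz] with s hs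
      rw [hw0 s hs, mul_zero]
    rw [h1.deriv_eq, deriv_const]
  have h1 := hρ0 z hz
  rw [deltaRho, hd, sub_zero] at h1
  have hlne : -(l:ℂ) * ((e.ρ z : ℝ) : ℂ) ≠ 0 := by
    apply mul_ne_zero
    · simpa using (by exact_mod_cast hl.ne' : (l:ℂ) ≠ 0)
    · exact_mod_cast (hρpos z hz).ne'
  exact (mul_eq_zero.mp h1).resolve_left hlne
end
end

section
/- Let (ρ, P) be an admissible equilibrium, l > 0 and λ > 0. Then the space of solutions (w, η) of the system (S_{l,λ}) on (0, z_+) satisfying ∫₀^{z_+} ρ|w|² dz < ∞ and ∫₀^{z_+} |η|²/(c²ρ) dz < ∞ and lim_{z→0+} w(z) = 0 is at most one-dimensional: any two such solutions are linearly dependent. In particular every positive eigenvalue of the l-mode problem is simple. -/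
open MeasureTheory Set Filter Topology Asymptotics

noncomputable section

/-- Squared sound speed `c² = γP/ρ`. -/
def c2 {γ g zp : ℝ} (e : AdmissibleEquilibrium γ g zp) (z : ℝ) : ℝ :=
  γ * e.P z / e.ρ z

/-- `A₁₁ = −l²g/λ`. -/
def A11 (g l lam : ℝ) : ℝ := -(l ^ 2 * g / lam)

/-- `A₁₂ = (1 − l²c²/λ)/(c²ρ)`. -/
def A12 {γ g zp : ℝ} (e : AdmissibleEquilibrium γ g zp) (l lam z : ℝ) : ℝ :=
  (1 - l ^ 2 * c2 e z / lam) / (c2 e z * e.ρ z)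

/-- `A₂₁ = (l²g²/λ)(1 − λ²/(l²g²))ρ`. -/
def A21 {γ g zp : ℝ} (e : AdmissibleEquilibrium γ g zp) (l lam z : ℝ) : ℝ :=
  l ^ 2 * g ^ 2 / lam * (1 - lam ^ 2 / (l ^ 2 * g ^ 2)) * e.ρ z

/-- `A₂₂ = l²g/λ`. -/
def A22 (g l lam : ℝ) : ℝ := l ^ 2 * g / lam

/-- `(w, η)` solves the first-order system `(S_{l,λ})`:
`w' + A₁₁w + A₁₂η = 0`, `η' + A₂₁w + A₂₂η = 0` on the set `s`. -/
def SolvesSystem {γ g zp : ℝ} (e : AdmissibleEquilibrium γ g zp)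
    (l lam : ℝ) (w η : ℝ → ℝ) (s : Set ℝ) : Prop :=
  ∀ z ∈ s,
    HasDerivAt w (-(A11 g l lam * w z + A12 e l lam z * η z)) z ∧
    HasDerivAt η (-(A21 e l lam z * w z + A22 g l lam * η z)) z

/-- An admissible solution of `(S_{l,λ})` on `(0, z_+)`: it satisfies the boundary
condition `w → 0` at `z = 0` and the integrability conditions
`∫ ρ|w|² < ∞`, `∫ |η|²/(c²ρ) < ∞`. -/
def IsLSol {γ g zp : ℝ} (e : AdmissibleEquilibrium γ g zp)
    (l lam : ℝ) (w η : ℝ → ℝ) : Prop :=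
  SolvesSystem e l lam w η (Ioo 0 zp) ∧
  Tendsto w (𝓝[>] 0) (𝓝 0) ∧
  IntegrableOn (fun z => e.ρ z * w z ^ 2) (Ioo 0 zp) volume ∧
  IntegrableOn (fun z => η z ^ 2 / (c2 e z * e.ρ z)) (Ioo 0 zp) volume

/-- `lam ≠ 0` is an eigenvalue of the `l`-mode problem if `(S_{l,lam})` has a
nontrivial admissible solution. -/
def IsEigenvalue {γ g zp : ℝ} (e : AdmissibleEquilibrium γ g zp)
    (l lam : ℝ) : Prop :=
  lam ≠ 0 ∧ ∃ w η : ℝ → ℝ, IsLSol e l lam w η ∧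
    ¬ ∀ z ∈ Ioo 0 zp, w z = 0 ∧ η z = 0

/-- A simple eigenvalue: the space of admissible solutions is one-dimensional. -/
def IsSimpleEigenvalue {γ g zp : ℝ} (e : AdmissibleEquilibrium γ g zp)
    (l lam : ℝ) : Prop :=
  IsEigenvalue e l lam ∧
  ∀ w₁ η₁ w₂ η₂ : ℝ → ℝ, IsLSol e l lam w₁ η₁ → IsLSol e l lam w₂ η₂ →
    ∃ a b : ℝ, ¬ (a = 0 ∧ b = 0) ∧
      ∀ z ∈ Ioo 0 zp, a * w₁ z + b * w₂ z = 0 ∧ a * η₁ z + b * η₂ z = 0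

namespace EVSimpleAux

lemma P_pos {γ g zp : ℝ} (e : AdmissibleEquilibrium γ g zp) :
    ∀ z ∈ Ico 0 zp, 0 < e.P z := by
  intro z hz
  have hγ : (0:ℝ) < γ - 1 := sub_pos.2 e.hγ1
  have hΛ : Tendsto (fun x => e.Λ₂ (zp - x)) (𝓝[<] zp) (𝓝 0) := by
    have h1 : Tendsto (fun x : ℝ => zp - x) (𝓝[<] zp) (𝓝 0) := by
      have h : Tendsto (fun x : ℝ => zp - x) (𝓝 zp) (𝓝 (zp - zp)) :=
        tendsto_const_nhds.sub tendsto_id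
      simpa using h.mono_left nhdsWithin_le_nhds
    have h2 := e.hΛ₂.continuousAt.tendsto
    rw [e.hΛ₂0] at h2
    exact h2.comp h1
  have hev : ∀ᶠ x in 𝓝[<] zp, -1 < e.Λ₂ (zp - x) :=
    hΛ.eventually (eventually_gt_nhds (by norm_num))
  have hmem : Ioo z zp ∈ 𝓝[<] zp := Ioo_mem_nhdsLT_of_mem ⟨hz.2, le_refl zp⟩
  obtain ⟨z₁, ⟨hPz₁, hΛz₁⟩, hz₁⟩ := ((e.P_asymp.and hev).and hmem).exists
  have hPz₁pos : 0 < e.P z₁ := by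
    rw [hPz₁]
    have h1 : (0:ℝ) < g * e.Cρ / (1 / (γ - 1) + 1) := by
      have hg := e.hg; have hC := e.hCρ
      have hν : (0:ℝ) < 1 / (γ - 1) := by positivity
      positivity
    have h2 : (0:ℝ) < (zp - z₁) ^ ((1 / (γ - 1) : ℝ) + 1) :=
      Real.rpow_pos_of_pos (by linarith [hz₁.2]) _
    have h3 : (0:ℝ) < 1 + e.Λ₂ (zp - z₁) := by linarith
    positivity
  have hsub : Icc 0 z₁ ⊆ Ico 0 zp := fun t ht => ⟨ht.1, lt_of_le_of_lt ht.2 hz₁.2⟩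
  have hanti : StrictAntiOn e.P (Icc 0 z₁) := by
    apply strictAntiOn_of_deriv_neg (convex_Icc _ _)
      (e.P_smooth.continuousOn.mono hsub)
    intro x hx
    rw [interior_Icc] at hx
    have hx' : x ∈ Ico 0 zp := hsub (Ioo_subset_Icc_self hx)
    rw [e.hydro x hx']
    have h1 := e.ρ_pos x hx'
    have h2 := e.hg
    nlinarith
  have hlt : e.P z₁ < e.P z :=
    hanti ⟨hz.1, le_of_lt hz₁.1⟩ ⟨le_trans hz.1 (le_of_lt hz₁.1), le_refl z₁⟩ hz₁.1
  linarith

lemma eq_of_hasDerivAt_zero {f : ℝ → ℝ} {c d x y : ℝ}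
    (hf : ∀ t ∈ Ioo c d, HasDerivAt f 0 t)
    (hx : x ∈ Ioo c d) (hy : y ∈ Ioo c d) (hxy : x ≤ y) : f x = f y := by
  have hsub : Icc x y ⊆ Ioo c d := fun t ht =>
    ⟨lt_of_lt_of_le hx.1 ht.1, lt_of_le_of_lt ht.2 hy.2⟩
  have hint : interior (Icc x y) ⊆ Ioo c d := by
    rw [interior_Icc]; exact fun t ht => hsub (Ioo_subset_Icc_self ht)
  have hc : ContinuousOn f (Icc x y) := fun t ht =>
    (hf t (hsub ht)).continuousAt.continuousWithinAt
  have hmono : MonotoneOn f (Icc x y) :=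
    monotoneOn_of_hasDerivWithinAt_nonneg (convex_Icc _ _) hc (f' := fun _ => (0:ℝ))
      (fun t ht => (hf t (hint ht)).hasDerivWithinAt) (fun _ _ => le_refl 0)
  have hanti : AntitoneOn f (Icc x y) :=
    antitoneOn_of_hasDerivWithinAt_nonpos (convex_Icc _ _) hc (f' := fun _ => (0:ℝ))
      (fun t ht => (hf t (hint ht)).hasDerivWithinAt) (fun _ _ => le_refl 0)
  have h1 : x ∈ Icc x y := ⟨le_refl x, hxy⟩
  have h2 : y ∈ Icc x y := ⟨hxy, le_refl y⟩
  exact le_antisymm (hmono h1 h2 hxy) (hanti h1 h2 hxy)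

lemma coeff_bound {γ g zp : ℝ} (e : AdmissibleEquilibrium γ g zp) (l lam α β : ℝ)
    (hαβ : Icc α β ⊆ Ioo 0 zp) :
    ∃ K : ℝ, 0 ≤ K ∧ ∀ x ∈ Icc α β,
      |A11 g l lam| ≤ K ∧ |A12 e l lam x| ≤ K ∧ |A21 e l lam x| ≤ K ∧ |A22 g l lam| ≤ K := by
  have hsub : Icc α β ⊆ Ico 0 zp := fun t ht => Ioo_subset_Ico_self (hαβ ht)
  have hγpos : (0:ℝ) < γ := lt_trans one_pos e.hγ1
  have hρc : ContinuousOn e.ρ (Icc α β) := e.ρ_smooth.continuousOn.mono hsub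
  have hPc : ContinuousOn e.P (Icc α β) := e.P_smooth.continuousOn.mono hsub
  have hρpos : ∀ x ∈ Icc α β, 0 < e.ρ x := fun x hx => e.ρ_pos x (hsub hx)
  have hPpos : ∀ x ∈ Icc α β, 0 < e.P x := fun x hx => P_pos e x (hsub hx)
  have hc2 : ContinuousOn (c2 e) (Icc α β) := by
    apply ContinuousOn.div (continuousOn_const.mul hPc) hρc
    exact fun x hx => ne_of_gt (hρpos x hx)
  have hc2pos : ∀ x ∈ Icc α β, 0 < c2 e x := fun x hx =>
    div_pos (mul_pos hγpos (hPpos x hx)) (hρpos x hx)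
  have h12 : ContinuousOn (fun x => A12 e l lam x) (Icc α β) := by
    simp only [A12]
    apply ContinuousOn.div
    · exact continuousOn_const.sub ((continuousOn_const.mul hc2).div_const lam)
    · exact hc2.mul hρc
    · exact fun x hx => ne_of_gt (mul_pos (hc2pos x hx) (hρpos x hx))
  have h21 : ContinuousOn (fun x => A21 e l lam x) (Icc α β) := by
    simp only [A21]
    exact continuousOn_const.mul hρc
  obtain ⟨C1, hC1⟩ := isCompact_Icc.exists_bound_of_continuousOn h12
  obtain ⟨C2, hC2⟩ := isCompact_Icc.exists_bound_of_continuousOn h21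
  refine ⟨max (max |A11 g l lam| |A22 g l lam|) (max C1 C2), ?_, ?_⟩
  · exact le_trans (abs_nonneg _) (le_trans (le_max_left _ _) (le_max_left _ _))
  · intro x hx
    refine ⟨le_trans (le_max_left _ _) (le_max_left _ _), ?_, ?_,
      le_trans (le_max_right _ _) (le_max_left _ _)⟩
    · have h := hC1 x hx
      rw [Real.norm_eq_abs] at h
      exact le_trans h (le_trans (le_max_left _ _) (le_max_right _ _))
    · have h := hC2 x hx
      rw [Real.norm_eq_abs] at h
      exact le_trans h (le_trans (le_max_right _ _) (le_max_right _ _))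

lemma key_ineq {A B C D K u v : ℝ} (hA : |A| ≤ K) (hB : |B| ≤ K) (hC : |C| ≤ K)
    (hD : |D| ≤ K) :
    -(4*K*(u*u + v*v)) ≤ 2*u*(-(A*u + B*v)) + 2*v*(-(C*u + D*v)) ∧
      2*u*(-(A*u + B*v)) + 2*v*(-(C*u + D*v)) ≤ 4*K*(u*u + v*v) := by
  obtain ⟨hA1, hA2⟩ := abs_le.1 hA
  obtain ⟨hB1, hB2⟩ := abs_le.1 hB
  obtain ⟨hC1, hC2⟩ := abs_le.1 hC
  obtain ⟨hD1, hD2⟩ := abs_le.1 hD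
  constructor <;>
  nlinarith [mul_nonneg (by linarith : (0:ℝ) ≤ K - A) (mul_self_nonneg u),
    mul_nonneg (by linarith : (0:ℝ) ≤ K + A) (mul_self_nonneg u),
    mul_nonneg (by linarith : (0:ℝ) ≤ K - D) (mul_self_nonneg v),
    mul_nonneg (by linarith : (0:ℝ) ≤ K + D) (mul_self_nonneg v),
    mul_nonneg (by linarith : (0:ℝ) ≤ K - B) (mul_self_nonneg (u - v)),
    mul_nonneg (by linarith : (0:ℝ) ≤ K + B) (mul_self_nonneg (u - v)),
    mul_nonneg (by linarith : (0:ℝ) ≤ K - B) (mul_self_nonneg (u + v)),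
    mul_nonneg (by linarith : (0:ℝ) ≤ K + B) (mul_self_nonneg (u + v)),
    mul_nonneg (by linarith : (0:ℝ) ≤ K - C) (mul_self_nonneg (u - v)),
    mul_nonneg (by linarith : (0:ℝ) ≤ K + C) (mul_self_nonneg (u - v)),
    mul_nonneg (by linarith : (0:ℝ) ≤ K - C) (mul_self_nonneg (u + v)),
    mul_nonneg (by linarith : (0:ℝ) ≤ K + C) (mul_self_nonneg (u + v))]

end EVSimpleAux

namespace EVSimpleAux

lemma vanish_of_vanish_at {γ g zp : ℝ} (e : AdmissibleEquilibrium γ g zp) {l lam : ℝ}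
    {w η : ℝ → ℝ} (hsol : SolvesSystem e l lam w η (Ioo 0 zp))
    {z₀ : ℝ} (hz₀ : z₀ ∈ Ioo 0 zp) (hw0 : w z₀ = 0) (hη0 : η z₀ = 0) :
    ∀ z ∈ Ioo 0 zp, w z = 0 ∧ η z = 0 := by
  -- derivative of h = w² + η²
  have hd : ∀ x ∈ Ioo 0 zp, HasDerivAt (fun y => w y * w y + η y * η y)
      (2 * w x * (-(A11 g l lam * w x + A12 e l lam x * η x)) +
        2 * η x * (-(A21 e l lam x * w x + A22 g l lam * η x))) x := by
    intro x hx
    obtain ⟨h1, h2⟩ := hsol x hx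
    have h := (h1.mul h1).add (h2.mul h2)
    refine h.congr_deriv ?_
    ring
  intro z hz
  rcases le_total z₀ z with hle | hle
  · -- forward in time
    have hs : Icc z₀ z ⊆ Ioo 0 zp := fun t ht =>
      ⟨lt_of_lt_of_le hz₀.1 ht.1, lt_of_le_of_lt ht.2 hz.2⟩
    obtain ⟨K, hK0, hK⟩ := coeff_bound e l lam z₀ z hs
    set φ : ℝ → ℝ := fun x => Real.exp (-(4*K) * x) * (w x * w x + η x * η x) with hφ
    have hφd : ∀ x ∈ Ioo 0 zp, HasDerivAt φ
        (Real.exp (-(4*K)*x) * (-(4*K)) * (w x * w x + η x * η x) +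
          Real.exp (-(4*K)*x) *
          (2 * w x * (-(A11 g l lam * w x + A12 e l lam x * η x)) +
            2 * η x * (-(A21 e l lam x * w x + A22 g l lam * η x)))) x := by
      intro x hx
      have hid : HasDerivAt (fun y : ℝ => -(4*K) * y) (-(4*K)) x := by
        simpa using (hasDerivAt_id x).const_mul (-(4*K))
      exact (hid.exp).mul (hd x hx)
    have hanti : AntitoneOn φ (Icc z₀ z) := by
      apply antitoneOn_of_hasDerivWithinAt_nonpos (convex_Icc _ _)
        (fun t ht => (hφd t (hs ht)).continuousAt.continuousWithinAt)
        (fun t ht => by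
          rw [interior_Icc] at ht
          exact (hφd t (hs (Ioo_subset_Icc_self ht))).hasDerivWithinAt)
      intro t ht
      rw [interior_Icc] at ht
      have htm : t ∈ Icc z₀ z := Ioo_subset_Icc_self ht
      obtain ⟨b11, b12, b21, b22⟩ := hK t htm
      have hki := (key_ineq b11 b12 b21 b22 (u := w t) (v := η t)).2
      have hE := Real.exp_pos (-(4*K)*t)
      nlinarith [mul_self_nonneg (w t), mul_self_nonneg (η t),
        mul_le_mul_of_nonneg_left hki (le_of_lt hE)]
    have hm0 : z₀ ∈ Icc z₀ z := ⟨le_refl _, hle⟩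
    have hm1 : z ∈ Icc z₀ z := ⟨hle, le_refl _⟩
    have hφz₀ : φ z₀ = 0 := by simp [hφ, hw0, hη0]
    have hφle : Real.exp (-(4*K)*z) * (w z * w z + η z * η z) ≤ 0 := by
      have h := hanti hm0 hm1 hle
      rw [hφz₀] at h
      simpa [hφ] using h
    have hE := Real.exp_pos (-(4*K)*z)
    have hh0 : w z * w z + η z * η z ≤ 0 := by
      nlinarith [mul_self_nonneg (w z), mul_self_nonneg (η z)]
    constructor
    · have : w z * w z = 0 := by nlinarith [mul_self_nonneg (w z), mul_self_nonneg (η z)]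
      exact mul_self_eq_zero.1 this
    · have : η z * η z = 0 := by nlinarith [mul_self_nonneg (w z), mul_self_nonneg (η z)]
      exact mul_self_eq_zero.1 this
  · -- backward in time
    have hs : Icc z z₀ ⊆ Ioo 0 zp := fun t ht =>
      ⟨lt_of_lt_of_le hz.1 ht.1, lt_of_le_of_lt ht.2 hz₀.2⟩
    obtain ⟨K, hK0, hK⟩ := coeff_bound e l lam z z₀ hs
    set φ : ℝ → ℝ := fun x => Real.exp ((4*K) * x) * (w x * w x + η x * η x) with hφ
    have hφd : ∀ x ∈ Ioo 0 zp, HasDerivAt φ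
        (Real.exp ((4*K)*x) * (4*K) * (w x * w x + η x * η x) +
          Real.exp ((4*K)*x) *
          (2 * w x * (-(A11 g l lam * w x + A12 e l lam x * η x)) +
            2 * η x * (-(A21 e l lam x * w x + A22 g l lam * η x)))) x := by
      intro x hx
      have hid : HasDerivAt (fun y : ℝ => (4*K) * y) (4*K) x := by
        simpa using (hasDerivAt_id x).const_mul (4*K)
      exact (hid.exp).mul (hd x hx)
    have hmono : MonotoneOn φ (Icc z z₀) := by
      apply monotoneOn_of_hasDerivWithinAt_nonneg (convex_Icc _ _)
        (fun t ht => (hφd t (hs ht)).continuousAt.continuousWithinAt)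
        (fun t ht => by
          rw [interior_Icc] at ht
          exact (hφd t (hs (Ioo_subset_Icc_self ht))).hasDerivWithinAt)
      intro t ht
      rw [interior_Icc] at ht
      have htm : t ∈ Icc z z₀ := Ioo_subset_Icc_self ht
      obtain ⟨b11, b12, b21, b22⟩ := hK t htm
      have hki := (key_ineq b11 b12 b21 b22 (u := w t) (v := η t)).1
      have hE := Real.exp_pos ((4*K)*t)
      nlinarith [mul_self_nonneg (w t), mul_self_nonneg (η t),
        mul_le_mul_of_nonneg_left hki (le_of_lt hE)]
    have hm0 : z₀ ∈ Icc z z₀ := ⟨hle, le_refl _⟩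
    have hm1 : z ∈ Icc z z₀ := ⟨le_refl _, hle⟩
    have hφz₀ : φ z₀ = 0 := by simp [hφ, hw0, hη0]
    have hφle : Real.exp ((4*K)*z) * (w z * w z + η z * η z) ≤ 0 := by
      have h := hmono hm1 hm0 hle
      rw [hφz₀] at h
      simpa [hφ] using h
    have hE := Real.exp_pos ((4*K)*z)
    have hh0 : w z * w z + η z * η z ≤ 0 := by
      nlinarith [mul_self_nonneg (w z), mul_self_nonneg (η z)]
    constructor
    · have : w z * w z = 0 := by nlinarith [mul_self_nonneg (w z), mul_self_nonneg (η z)]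
      exact mul_self_eq_zero.1 this
    · have : η z * η z = 0 := by nlinarith [mul_self_nonneg (w z), mul_self_nonneg (η z)]
      exact mul_self_eq_zero.1 this

end EVSimpleAux

namespace EVSimpleAux

lemma eta_bounded {γ g zp : ℝ} (e : AdmissibleEquilibrium γ g zp) {l lam : ℝ}
    {w η : ℝ → ℝ} (hsol : SolvesSystem e l lam w η (Ioo 0 zp))
    (hw : Tendsto w (𝓝[>] (0:ℝ)) (𝓝 0)) :
    ∃ δ B : ℝ, 0 < δ ∧ δ < zp ∧ ∀ x ∈ Ioo (0:ℝ) δ, |η x| ≤ B := by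
  have hzp := e.hzp
  -- w is bounded by 1 near 0
  have h1 : w ⁻¹' Metric.ball 0 1 ∈ 𝓝[>] (0:ℝ) := hw (Metric.ball_mem_nhds 0 one_pos)
  obtain ⟨u, hu, husub⟩ := mem_nhdsGT_iff_exists_Ioo_subset.1 h1
  rw [mem_Ioi] at hu
  set δ := min u zp / 2 with hδdef
  have hδpos : 0 < δ := by positivity
  have hδu : δ ≤ u := by
    have : min u zp ≤ u := min_le_left _ _
    have h0 : 0 < min u zp := lt_min hu hzp
    rw [hδdef]; linarith
  have hδzp : δ < zp := by
    have : min u zp ≤ zp := min_le_right _ _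
    rw [hδdef]; linarith
  have hwb : ∀ x ∈ Ioo (0:ℝ) δ, |w x| ≤ 1 := by
    intro x hx
    have hxu : x ∈ Ioo 0 u := ⟨hx.1, lt_of_lt_of_le hx.2 hδu⟩
    have := husub hxu
    simp only [mem_preimage, Metric.mem_ball, Real.dist_eq, sub_zero] at this
    exact le_of_lt this
  -- bound on ρ near 0
  have hsubI : Icc (0:ℝ) δ ⊆ Ico 0 zp := fun t ht => ⟨ht.1, lt_of_le_of_lt ht.2 hδzp⟩
  obtain ⟨R, hR⟩ := isCompact_Icc.exists_bound_of_continuousOn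
    (e.ρ_smooth.continuousOn.mono hsubI)
  have hR0 : 0 ≤ R := le_trans (norm_nonneg _) (hR 0 ⟨le_refl _, le_of_lt hδpos⟩)
  set c0 : ℝ := l ^ 2 * g ^ 2 / lam * (1 - lam ^ 2 / (l ^ 2 * g ^ 2)) with hc0
  set A : ℝ := A22 g l lam with hA
  set M' : ℝ := Real.exp (|A| * δ) * (|c0| * R) with hM'
  set ψ : ℝ → ℝ := fun y => Real.exp (A * y) * η y with hψ
  have hψd : ∀ x ∈ Ioo (0:ℝ) δ, HasDerivAt ψ
      (Real.exp (A * x) * (-(A21 e l lam x * w x))) x := by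
    intro x hx
    have hx' : x ∈ Ioo 0 zp := ⟨hx.1, lt_trans hx.2 hδzp⟩
    have hid : HasDerivAt (fun y : ℝ => A * y) A x := by
      simpa using (hasDerivAt_id x).const_mul A
    have h := (hid.exp).mul (hsol x hx').2
    refine h.congr_deriv ?_
    rw [hA]
    ring
  have hbound : ∀ x ∈ Ioo (0:ℝ) δ,
      ‖Real.exp (A * x) * (-(A21 e l lam x * w x))‖ ≤ M' := by
    intro x hx
    rw [Real.norm_eq_abs, abs_mul, abs_neg, abs_mul]
    have he1 : |Real.exp (A * x)| ≤ Real.exp (|A| * δ) := by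
      rw [abs_of_pos (Real.exp_pos _)]
      apply Real.exp_le_exp.2
      calc A * x ≤ |A * x| := le_abs_self _
        _ = |A| * |x| := abs_mul _ _
        _ ≤ |A| * δ := by
            apply mul_le_mul_of_nonneg_left _ (abs_nonneg A)
            rw [abs_of_pos hx.1]; exact le_of_lt hx.2
    have he2 : |A21 e l lam x| * |w x| ≤ |c0| * R := by
      have hA21 : |A21 e l lam x| ≤ |c0| * R := by
        have : A21 e l lam x = c0 * e.ρ x := rfl
        rw [this, abs_mul]
        apply mul_le_mul_of_nonneg_left _ (abs_nonneg c0)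
        have := hR x ⟨le_of_lt hx.1, le_of_lt hx.2⟩
        rwa [Real.norm_eq_abs] at this
      calc |A21 e l lam x| * |w x| ≤ (|c0| * R) * 1 :=
            mul_le_mul hA21 (hwb x hx) (abs_nonneg _) (by positivity)
        _ = |c0| * R := mul_one _
    calc |Real.exp (A * x)| * (|A21 e l lam x| * |w x|)
        ≤ Real.exp (|A| * δ) * (|c0| * R) :=
          mul_le_mul he1 he2 (by positivity) (le_of_lt (Real.exp_pos _))
      _ = M' := rfl
  have hmid : δ / 2 ∈ Ioo (0:ℝ) δ := ⟨by positivity, by linarith⟩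
  have hψb : ∀ x ∈ Ioo (0:ℝ) δ, |ψ x| ≤ |ψ (δ/2)| + M' * δ := by
    intro x hx
    have hlip := Convex.norm_image_sub_le_of_norm_hasDerivWithin_le
      (f := ψ) (f' := fun x => Real.exp (A * x) * (-(A21 e l lam x * w x)))
      (fun t ht => (hψd t ht).hasDerivWithinAt) hbound (convex_Ioo _ _) hmid hx
    rw [Real.norm_eq_abs, Real.norm_eq_abs] at hlip
    have hM'0 : 0 ≤ M' := by
      rw [hM']; positivity
    have hdist : |x - δ/2| ≤ δ := by
      rw [abs_le]; constructor <;> [linarith [hx.1, hx.2]; linarith [hx.1, hx.2]]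
    calc |ψ x| = |(ψ x - ψ (δ/2)) + ψ (δ/2)| := by ring_nf
      _ ≤ |ψ x - ψ (δ/2)| + |ψ (δ/2)| := abs_add_le _ _
      _ ≤ M' * δ + |ψ (δ/2)| := by
          have := le_trans hlip (mul_le_mul_of_nonneg_left hdist hM'0)
          linarith
      _ = |ψ (δ/2)| + M' * δ := by ring
  refine ⟨δ, Real.exp (|A| * δ) * (|ψ (δ/2)| + M' * δ), hδpos, hδzp, ?_⟩
  intro x hx
  have hψx := hψb x hx
  have hkey : Real.exp (A * x) * |η x| = |ψ x| := by
    rw [hψ]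
    simp only [abs_mul, abs_of_pos (Real.exp_pos (A * x))]
  have hge1 : (1:ℝ) ≤ Real.exp (|A| * δ) * Real.exp (A * x) := by
    rw [← Real.exp_add]
    apply Real.one_le_exp
    have h1 : -(|A| * δ) ≤ A * x := by
      have h2 : |A * x| ≤ |A| * δ := by
        rw [abs_mul]
        apply mul_le_mul_of_nonneg_left _ (abs_nonneg A)
        rw [abs_of_pos hx.1]; exact le_of_lt hx.2
      linarith [neg_abs_le (A * x)]
    linarith
  have hEδ := Real.exp_pos (|A| * δ)
  have hEx := Real.exp_pos (A * x)
  nlinarith [abs_nonneg (η x), hψx, hkey,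
    mul_le_mul_of_nonneg_left hψx (le_of_lt hEδ),
    mul_nonneg (le_of_lt hEδ) (mul_nonneg (le_of_lt hEx) (abs_nonneg (η x)))]

end EVSimpleAux

namespace EVSimpleAux

lemma solves_comb {γ g zp : ℝ} {e : AdmissibleEquilibrium γ g zp} {l lam : ℝ}
    {w₁ η₁ w₂ η₂ : ℝ → ℝ} (h1 : SolvesSystem e l lam w₁ η₁ (Ioo 0 zp))
    (h2 : SolvesSystem e l lam w₂ η₂ (Ioo 0 zp)) (a b : ℝ) :
    SolvesSystem e l lam (fun x => a * w₁ x + b * w₂ x)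
      (fun x => a * η₁ x + b * η₂ x) (Ioo 0 zp) := by
  intro x hx
  obtain ⟨h1w, h1η⟩ := h1 x hx
  obtain ⟨h2w, h2η⟩ := h2 x hx
  constructor
  · have h := (h1w.const_mul a).add (h2w.const_mul b)
    refine h.congr_deriv ?_
    ring
  · have h := (h1η.const_mul a).add (h2η.const_mul b)
    refine h.congr_deriv ?_
    ring

end EVSimpleAux

open EVSimpleAux in
/-- For `l > 0` and `λ > 0`, the space of admissible solutions of `(S_{l,λ})`
(i.e. with `w → 0` at `z = 0`, `∫ρ|w|² < ∞`, `∫|η|²/(c²ρ) < ∞`) is at most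
one-dimensional; in particular every positive eigenvalue of the `l`-mode problem
is simple. -/
theorem positive_eigenvalues_simple {γ g zp : ℝ}
    (e : AdmissibleEquilibrium γ g zp) (l lam : ℝ) (hl : 0 < l) (hlam : 0 < lam) :
    ∀ w₁ η₁ w₂ η₂ : ℝ → ℝ, IsLSol e l lam w₁ η₁ → IsLSol e l lam w₂ η₂ →
      ∃ a b : ℝ, ¬ (a = 0 ∧ b = 0) ∧
        ∀ z ∈ Ioo 0 zp, a * w₁ z + b * w₂ z = 0 ∧ a * η₁ z + b * η₂ z = 0 := by
  intro w₁ η₁ w₂ η₂ hs1 hs2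
  obtain ⟨hsol1, hw1, -, -⟩ := hs1
  obtain ⟨hsol2, hw2, -, -⟩ := hs2
  by_cases htriv : ∀ z ∈ Ioo (0:ℝ) zp, w₁ z = 0 ∧ η₁ z = 0
  · exact ⟨1, 0, by simp, fun z hz => by
      simp [(htriv z hz).1, (htriv z hz).2]⟩
  push_neg at htriv
  obtain ⟨z₀, hz₀, hne⟩ := htriv
  -- the Wronskian has zero derivative
  have hWd : ∀ x ∈ Ioo (0:ℝ) zp,
      HasDerivAt (fun y => w₁ y * η₂ y - w₂ y * η₁ y) 0 x := by
    intro x hx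
    obtain ⟨h1w, h1η⟩ := hsol1 x hx
    obtain ⟨h2w, h2η⟩ := hsol2 x hx
    have h := (h1w.mul h2η).sub (h2w.mul h1η)
    refine h.congr_deriv ?_
    simp only [A11, A22]
    ring
  -- the Wronskian vanishes identically
  have hWzero : ∀ x ∈ Ioo (0:ℝ) zp, w₁ x * η₂ x - w₂ x * η₁ x = 0 := by
    obtain ⟨δ₁, B₁, hδ₁, hδ₁zp, hB₁⟩ := eta_bounded e hsol1 hw1
    obtain ⟨δ₂, B₂, hδ₂, hδ₂zp, hB₂⟩ := eta_bounded e hsol2 hw2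
    have hT : Tendsto (fun y => w₁ y * η₂ y - w₂ y * η₁ y) (𝓝[>] (0:ℝ)) (𝓝 0) := by
      have t1 : Tendsto (fun y => w₁ y * η₂ y) (𝓝[>] (0:ℝ)) (𝓝 0) :=
        hw1.zero_mul_isBoundedUnder_le (isBoundedUnder_of_eventually_le (a := B₂)
          (eventually_of_mem (Ioo_mem_nhdsGT hδ₂) (fun y hy => by
            simpa [Real.norm_eq_abs] using hB₂ y hy)))
      have t2 : Tendsto (fun y => w₂ y * η₁ y) (𝓝[>] (0:ℝ)) (𝓝 0) :=
        hw2.zero_mul_isBoundedUnder_le (isBoundedUnder_of_eventually_le (a := B₁)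
          (eventually_of_mem (Ioo_mem_nhdsGT hδ₁) (fun y hy => by
            simpa [Real.norm_eq_abs] using hB₁ y hy)))
      simpa using t1.sub t2
    intro x hx
    have hconst : ∀ y ∈ Ioo (0:ℝ) zp,
        w₁ y * η₂ y - w₂ y * η₁ y = w₁ x * η₂ x - w₂ x * η₁ x := by
      intro y hy
      rcases le_total y x with h | h
      · exact eq_of_hasDerivAt_zero hWd hy hx h
      · exact (eq_of_hasDerivAt_zero hWd hx hy h).symm
    have heq : (fun y => w₁ y * η₂ y - w₂ y * η₁ y)
        =ᶠ[𝓝[>] (0:ℝ)] (fun _ => w₁ x * η₂ x - w₂ x * η₁ x) := by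
      filter_upwards [Ioo_mem_nhdsGT e.hzp] with y hy
      exact hconst y hy
    exact tendsto_const_nhds_iff.1 (hT.congr' heq)
  have hW0 := hWzero z₀ hz₀
  by_cases hw₁0 : w₁ z₀ = 0
  · have hη₁0 : η₁ z₀ ≠ 0 := hne hw₁0
    refine ⟨η₂ z₀ / η₁ z₀, -1, by simp, ?_⟩
    have hcomb := solves_comb hsol1 hsol2 (η₂ z₀ / η₁ z₀) (-1)
    have hu0 : η₂ z₀ / η₁ z₀ * w₁ z₀ + (-1) * w₂ z₀ = 0 := by
      rw [hw₁0] at hW0 ⊢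
      have hw₂0 : w₂ z₀ = 0 := by
        rcases mul_eq_zero.1 (by linarith : w₂ z₀ * η₁ z₀ = 0) with h | h
        · exact h
        · exact absurd h hη₁0
      rw [hw₂0]; ring
    have hv0 : η₂ z₀ / η₁ z₀ * η₁ z₀ + (-1) * η₂ z₀ = 0 := by
      field_simp
      ring
    intro z hz
    have := vanish_of_vanish_at e hcomb hz₀ hu0 hv0 z hz
    exact this
  · refine ⟨w₂ z₀ / w₁ z₀, -1, by simp, ?_⟩
    have hcomb := solves_comb hsol1 hsol2 (w₂ z₀ / w₁ z₀) (-1)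
    have hu0 : w₂ z₀ / w₁ z₀ * w₁ z₀ + (-1) * w₂ z₀ = 0 := by
      field_simp
      ring
    have hv0 : w₂ z₀ / w₁ z₀ * η₁ z₀ + (-1) * η₂ z₀ = 0 := by
      field_simp
      nlinarith [hW0]
    intro z hz
    have := vanish_of_vanish_at e hcomb hz₀ hu0 hv0 z hz
    exact this
end
end
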